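/- arXiv:1906.00890 — 2 statements merged into one kernel-verified Lean document; each statement's English description precedes it below -/
import Mathlib

section
/- Let {V_k}_{k≥0} be a sequence of nonempty finite sets of integers, and for each k let x_k, xᵉ_k : V_k → ℝ. Let γ ∈ [0,1), B, H ≥ 0 and β > γ, and assume for every k ≥ 0: (i) sqrt( Σ_{v ∈ V_k ∩ V_{k+1}} (x_{k+1,v} − xᵉ_{k,v})² ) ≤ γ · d(x_k, xᵉ_k); (ii) d(xᵉ_{k+1}, xᵉ_k) ≤ sqrt(|V_{k+1}|) · B; (iii) sqrt( Σ_{v ∈ V_{k+1} \ V_k} (x_{k+1,v} − xᵉ_{k+1,v})² ) ≤ sqrt(|V_{k+1}|) · H; (iv) |V_{k+1}| ≥ β² · |V_k|. Then for every k ≥ 0, d(x_k, xᵉ_k)/sqrt(|V_k|) ≤ (γ/β)^k · d(x_0, xᵉ_0)/sqrt(|V_0|) + (B + H)/(1 − γ/β). -/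
open Finset

/-- The open distance between two vectors `x : V₁ → ℝ` and `y : V₂ → ℝ`
(encoded as functions `ℤ → ℝ` together with their index sets `V₁, V₂`). -/
noncomputable def openDist (V₁ V₂ : Finset ℤ) (x y : ℤ → ℝ) : ℝ :=
  Real.sqrt ((∑ v ∈ V₁ ∩ V₂, (x v - y v) ^ 2) +
    (∑ v ∈ V₁ \ V₂, (x v) ^ 2) + (∑ v ∈ V₂ \ V₁, (y v) ^ 2))

/-!
Write `d_k` for the distance between `x_k` and `xᵉ_k` on `V_k`. Splitting `V_{k+1}` into the agents
that stay and those that join, and inserting `xᵉ_k` on the former, the triangle inequality and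
(i)–(iii) give `d_{k+1} ≤ γ d_k + √|V_{k+1}| (B + H)`. Dividing by `√|V_{k+1}| ≥ β √|V_k|` turns
this into the affine recursion `a_{k+1} ≤ (γ/β) a_k + (B + H)` for `a_k = d_k / √|V_k|`, which
unrolls to the bound since `γ/β < 1`.
-/

lemma Real.sqrt_add_le_add_sqrt (a b : ℝ) : √(a + b) ≤ √a + √b := by
  rcases lt_or_ge a 0 with ha | ha
  · rw [Real.sqrt_eq_zero_of_nonpos ha.le, zero_add]
    exact Real.sqrt_le_sqrt (by linarith)
  rcases lt_or_ge b 0 with hb | hb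
  · rw [Real.sqrt_eq_zero_of_nonpos hb.le, add_zero]
    exact Real.sqrt_le_sqrt (by linarith)
  rw [Real.sqrt_le_left (by positivity)]
  nlinarith [Real.sq_sqrt ha, Real.sq_sqrt hb, Real.sqrt_nonneg a, Real.sqrt_nonneg b]

lemma sqrt_sum_sub_sq_le_add {ι : Type*} (s : Finset ι) (f g h : ι → ℝ) :
    √(∑ i ∈ s, (f i - h i) ^ 2) ≤ √(∑ i ∈ s, (f i - g i) ^ 2) + √(∑ i ∈ s, (h i - g i) ^ 2) := by
  have hdist (u w : ι → ℝ) : √(∑ i ∈ s, (u i - w i) ^ 2) =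
      dist (WithLp.toLp 2 fun i : s => u i : EuclideanSpace ℝ s) (WithLp.toLp 2 fun i : s => w i) := by
    rw [EuclideanSpace.dist_eq]
    simp only [Real.dist_eq, sq_abs]
    exact congrArg _ (Finset.sum_coe_sort s fun i => (u i - w i) ^ 2).symm
  simpa only [hdist] using dist_triangle_right _ _ _

lemma openDist_self (V : Finset ℤ) (x y : ℤ → ℝ) :
    openDist V V x y = √(∑ v ∈ V, (x v - y v) ^ 2) := by
  simp only [openDist, inter_self, sdiff_self, bot_eq_empty, sum_empty, add_zero]

lemma sqrt_sum_inter_sub_sq_le_openDist (V₁ V₂ : Finset ℤ) (x y : ℤ → ℝ) :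
    √(∑ v ∈ V₁ ∩ V₂, (x v - y v) ^ 2) ≤ openDist V₁ V₂ x y := by
  refine Real.sqrt_le_sqrt ?_
  have h₁ : 0 ≤ ∑ v ∈ V₁ \ V₂, x v ^ 2 := sum_nonneg fun _ _ => sq_nonneg _
  have h₂ : 0 ≤ ∑ v ∈ V₂ \ V₁, y v ^ 2 := sum_nonneg fun _ _ => sq_nonneg _
  linarith

lemma openDist_self_le_of_step (V W : Finset ℤ) (x' xe xe' : ℤ → ℝ) :
    openDist W W x' xe' ≤ √(∑ v ∈ V ∩ W, (x' v - xe v) ^ 2) + openDist W V xe' xe +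
      √(∑ v ∈ W \ V, (x' v - xe' v) ^ 2) := by
  rw [openDist_self, ← sum_inter_add_sum_sdiff W V]
  calc √((∑ v ∈ W ∩ V, (x' v - xe' v) ^ 2) + ∑ v ∈ W \ V, (x' v - xe' v) ^ 2)
      ≤ √(∑ v ∈ W ∩ V, (x' v - xe' v) ^ 2) + √(∑ v ∈ W \ V, (x' v - xe' v) ^ 2) :=
        Real.sqrt_add_le_add_sqrt _ _
    _ ≤ √(∑ v ∈ W ∩ V, (x' v - xe v) ^ 2) + √(∑ v ∈ W ∩ V, (xe' v - xe v) ^ 2) +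
          √(∑ v ∈ W \ V, (x' v - xe' v) ^ 2) := by
        gcongr; exact sqrt_sum_sub_sq_le_add _ _ _ _
    _ ≤ _ := by
        rw [inter_comm W V]
        gcongr
        rw [inter_comm]
        exact sqrt_sum_inter_sub_sq_le_openDist W V xe' xe

lemma div_le_div_mul_div_add {d d' s s' γ β C : ℝ} (hd : 0 ≤ d) (hγ : 0 ≤ γ) (hβ : 0 < β)
    (hs : 0 < s) (hs' : β * s ≤ s') (h : d' ≤ γ * d + s' * C) :
    d' / s' ≤ γ / β * (d / s) + C := by
  have hs'0 : 0 < s' := (mul_pos hβ hs).trans_le hs'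
  calc d' / s' ≤ γ * d / s' + C := by
        rw [div_add' _ _ _ hs'0.ne', div_le_div_iff_of_pos_right hs'0]; linarith
    _ ≤ γ * d / (β * s) + C := by gcongr
    _ = γ / β * (d / s) + C := by rw [mul_div_mul_comm]

lemma le_pow_mul_add_div_of_le_mul_add {a : ℕ → ℝ} {q C : ℝ} (hq0 : 0 ≤ q) (hq1 : q < 1)
    (hC : 0 ≤ C) (h : ∀ k, a (k + 1) ≤ q * a k + C) (k : ℕ) :
    a k ≤ q ^ k * a 0 + C / (1 - q) := by
  have hfix : q * (C / (1 - q)) + C = C / (1 - q) := by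
    field_simp [(sub_pos.2 hq1).ne']; ring
  induction k with
  | zero => simpa using div_nonneg hC (sub_pos.2 hq1).le
  | succ k ih =>
    calc a (k + 1) ≤ q * (q ^ k * a 0 + C / (1 - q)) + C := by
          have := mul_le_mul_of_nonneg_left ih hq0; linarith [h k]
      _ = q ^ (k + 1) * a 0 + (q * (C / (1 - q)) + C) := by ring
      _ = q ^ (k + 1) * a 0 + C / (1 - q) := by rw [hfix]

theorem openMAS_normalized_distance_bound_general (V : ℕ → Finset ℤ)
    (hV : ∀ k, (V k).Nonempty) (x xe : ℕ → ℤ → ℝ)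
    (γ B H β : ℝ) (hγ0 : 0 ≤ γ) (hB : 0 ≤ B) (hH : 0 ≤ H)
    (hβ : β > γ)
    (hcontr : ∀ k, Real.sqrt (∑ v ∈ V k ∩ V (k + 1), (x (k + 1) v - xe k v) ^ 2) ≤
      γ * openDist (V k) (V k) (x k) (xe k))
    (hvar : ∀ k, openDist (V (k + 1)) (V k) (xe (k + 1)) (xe k) ≤
      Real.sqrt ((V (k + 1)).card) * B)
    (hjoin : ∀ k, Real.sqrt (∑ v ∈ V (k + 1) \ V k, (x (k + 1) v - xe (k + 1) v) ^ 2) ≤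
      Real.sqrt ((V (k + 1)).card) * H)
    (hcard : ∀ k, ((V (k + 1)).card : ℝ) ≥ β ^ 2 * ((V k).card : ℝ)) :
    ∀ k, openDist (V k) (V k) (x k) (xe k) / Real.sqrt ((V k).card) ≤
      (γ / β) ^ k * (openDist (V 0) (V 0) (x 0) (xe 0) / Real.sqrt ((V 0).card)) +
        (B + H) / (1 - γ / β) := by
  have hβ0 : 0 < β := hγ0.trans_lt hβ
  have hsqrt_card_pos (k : ℕ) : 0 < √((V k).card : ℝ) :=
    Real.sqrt_pos.2 (by exact_mod_cast (hV k).card_pos)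
  have hsqrt_card_growth (k : ℕ) : β * √((V k).card : ℝ) ≤ √((V (k + 1)).card : ℝ) := by
    rw [Real.le_sqrt (by positivity) (by positivity), mul_pow, Real.sq_sqrt (by positivity)]
    exact hcard k
  have hstep (k : ℕ) : openDist (V (k + 1)) (V (k + 1)) (x (k + 1)) (xe (k + 1)) ≤
      γ * openDist (V k) (V k) (x k) (xe k) + √((V (k + 1)).card : ℝ) * (B + H) := by
    calc _ ≤ _ := openDist_self_le_of_step (V k) (V (k + 1)) (x (k + 1)) (xe k) (xe (k + 1))
      _ ≤ _ := add_le_add (add_le_add (hcontr k) (hvar k)) (hjoin k)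
      _ = _ := by ring
  exact le_pow_mul_add_div_of_le_mul_add (div_nonneg hγ0 hβ0.le) ((div_lt_one hβ0).2 hβ)
    (add_nonneg hB hH) fun k => div_le_div_mul_div_add (Real.sqrt_nonneg _) hγ0 hβ0
      (hsqrt_card_pos k) (hsqrt_card_growth k) (hstep k)

/-- Explicit iterate bound on the normalized distance between the state of a
contractive open multi-agent system and its trajectory of points of interest. -/
theorem openMAS_normalized_distance_bound (V : ℕ → Finset ℤ)
    (hV : ∀ k, (V k).Nonempty) (x xe : ℕ → ℤ → ℝ)
    (γ B H β : ℝ) (hγ0 : 0 ≤ γ) (hγ1 : γ < 1) (hB : 0 ≤ B) (hH : 0 ≤ H)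
    (hβ : β > γ)
    (hcontr : ∀ k, Real.sqrt (∑ v ∈ V k ∩ V (k + 1), (x (k + 1) v - xe k v) ^ 2) ≤
      γ * openDist (V k) (V k) (x k) (xe k))
    (hvar : ∀ k, openDist (V (k + 1)) (V k) (xe (k + 1)) (xe k) ≤
      Real.sqrt ((V (k + 1)).card) * B)
    (hjoin : ∀ k, Real.sqrt (∑ v ∈ V (k + 1) \ V k, (x (k + 1) v - xe (k + 1) v) ^ 2) ≤
      Real.sqrt ((V (k + 1)).card) * H)
    (hcard : ∀ k, ((V (k + 1)).card : ℝ) ≥ β ^ 2 * ((V k).card : ℝ)) :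
    ∀ k, openDist (V k) (V k) (x k) (xe k) / Real.sqrt ((V k).card) ≤
      (γ / β) ^ k * (openDist (V 0) (V 0) (x 0) (xe 0) / Real.sqrt ((V 0).card)) +
        (B + H) / (1 - γ / β) :=
  openMAS_normalized_distance_bound_general V hV x xe γ B H β hγ0 hB hH hβ hcontr hvar hjoin hcard
end

section
/- (Bounded join process of Open Proportional Dynamic Consensus.) Let G be a simple graph on a nonempty finite vertex type V with n = |V| vertices and graph Laplacian L, let α, ε > 0, and let λ₂ ≥ 0 be such that wᵀ L w ≥ λ₂ · ‖w‖² for every w : V → ℝ with Σ_v w_v = 0. Let u : V → ℝ with ‖u − ū‖_∞ ≤ Π, where ū is the constant vector of the average of u, and let xᵉ = (αI + εL)⁻¹ (α u). Then for every subset A of V (the set of arriving agents, who join with state equal to their input), sqrt( Σ_{v ∈ A} (u_v − xᵉ_v)² ) ≤ sqrt(n) · (1 + 1/(1 + (ε/α) λ₂)) · Π. -/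
open Matrix Finset WithLp
open scoped InnerProductSpace

/-! Write `u - xᵉ = w - p` with `w = u - ū` and `p = xᵉ - ū`. Since `L` kills constants,
`(αI + εL) p = α w`, and summing coordinates shows that `p` has mean zero like `w`. The
spectral-gap hypothesis then gives `(α + ελ₂)‖p‖² ≤ pᵀ(αI + εL)p = α⟪p, w⟫ ≤ α‖p‖‖w‖`, so
`‖p‖ ≤ ‖w‖ / (1 + (ε/α)λ₂)`, while `‖w‖ ≤ √n Π`; the triangle inequality concludes, and
restricting to `A` only drops terms. -/

theorem EuclideanSpace.sqrt_sum_sq_le_norm_toLp {ι : Type*} [Fintype ι] (s : Finset ι)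
    (x : ι → ℝ) : √(∑ i ∈ s, x i ^ 2) ≤ ‖toLp 2 x‖ := by
  simp only [EuclideanSpace.norm_eq, Real.norm_eq_abs, sq_abs]
  exact Real.sqrt_le_sqrt (sum_le_sum_of_subset_of_nonneg (subset_univ s) fun i _ _ => sq_nonneg _)

theorem EuclideanSpace.norm_toLp_le_sqrt_card_mul {ι : Type*} [Fintype ι] {x : ι → ℝ} {c : ℝ}
    (hc : 0 ≤ c) (hx : ∀ i, |x i| ≤ c) : ‖toLp 2 x‖ ≤ √(Fintype.card ι) * c := by
  calc ‖toLp 2 x‖ = √(∑ i, x i ^ 2) := by simp [EuclideanSpace.norm_eq]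
    _ ≤ √(∑ _ : ι, c ^ 2) :=
      Real.sqrt_le_sqrt (sum_le_sum fun i _ => sq_le_sq' (abs_le.mp (hx i)).1 (abs_le.mp (hx i)).2)
    _ = √(Fintype.card ι) * c := by
      rw [sum_const, card_univ, nsmul_eq_mul, Real.sqrt_mul (Nat.cast_nonneg _), Real.sqrt_sq hc]

theorem Finset.sum_sub_average_eq_zero {ι : Type*} [Fintype ι] [Nonempty ι] (x : ι → ℝ) :
    ∑ i, (x i - (∑ j, x j) / Fintype.card ι) = 0 := by
  rw [sum_sub_distrib, sum_const, card_univ, nsmul_eq_mul,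
    mul_div_cancel₀ _ (Nat.cast_ne_zero.mpr Fintype.card_ne_zero), sub_self]

namespace SimpleGraph

variable {V : Type*} [Fintype V] [DecidableEq V] (G : SimpleGraph V) [DecidableRel G.Adj]

theorem sum_lapMatrix_mulVec {R : Type*} [CommRing R] (x : V → R) :
    ∑ v, (G.lapMatrix R *ᵥ x) v = 0 :=
  calc ∑ v, (G.lapMatrix R *ᵥ x) v = (fun _ => 1) ⬝ᵥ G.lapMatrix R *ᵥ x := by simp [dotProduct]
    _ = (G.lapMatrix R *ᵥ fun _ => 1) ⬝ᵥ x := by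
      rw [dotProduct_mulVec, ← mulVec_transpose, (G.isSymm_lapMatrix (R := R)).eq]
    _ = 0 := by rw [lapMatrix_mulVec_const_eq_zero, zero_dotProduct]

theorem posDef_smul_one_add_smul_lapMatrix {α ε : ℝ} (hα : 0 < α) (hε : 0 ≤ ε) :
    (α • (1 : Matrix V V ℝ) + ε • G.lapMatrix ℝ).PosDef :=
  (PosDef.one.smul hα).add_posSemidef ((G.posSemidef_lapMatrix ℝ).smul hε)

theorem smul_one_add_smul_lapMatrix_mulVec_const (α ε c : ℝ) :
    (α • (1 : Matrix V V ℝ) + ε • G.lapMatrix ℝ) *ᵥ (fun _ => c) = α • fun _ => c := by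
  have : (fun _ => c : V → ℝ) = c • fun _ => 1 := by ext; simp
  rw [add_mulVec, smul_mulVec, smul_mulVec, one_mulVec, this, mulVec_smul,
    lapMatrix_mulVec_const_eq_zero, smul_zero, smul_zero, add_zero]

theorem sum_smul_one_add_smul_lapMatrix_mulVec (α ε : ℝ) (x : V → ℝ) :
    ∑ v, ((α • (1 : Matrix V V ℝ) + ε • G.lapMatrix ℝ) *ᵥ x) v = α * ∑ v, x v := by
  simp only [add_mulVec, smul_mulVec, one_mulVec, Pi.add_apply, Pi.smul_apply, smul_eq_mul,
    sum_add_distrib, ← mul_sum, sum_lapMatrix_mulVec, mul_zero, add_zero]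

theorem norm_toLp_le_of_smul_one_add_smul_lapMatrix_mulVec {α ε lam2 : ℝ} (hα : 0 < α)
    (hε : 0 ≤ ε) (hlam2 : 0 ≤ lam2)
    (hconn : ∀ w : V → ℝ, ∑ v, w v = 0 → lam2 * (w ⬝ᵥ w) ≤ w ⬝ᵥ G.lapMatrix ℝ *ᵥ w)
    {p w : V → ℝ} (hw : ∑ v, w v = 0)
    (hp : (α • (1 : Matrix V V ℝ) + ε • G.lapMatrix ℝ) *ᵥ p = α • w) :
    ‖toLp 2 p‖ ≤ α / (α + ε * lam2) * ‖toLp 2 w‖ := by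
  have hp_sum : ∑ v, p v = 0 := by
    have h := congrArg (fun x => ∑ v, x v) hp
    simp only [sum_smul_one_add_smul_lapMatrix_mulVec, Pi.smul_apply, smul_eq_mul, ← mul_sum,
      hw, mul_zero, mul_eq_zero, hα.ne', false_or] at h
    exact h
  have hnorm_sq : ‖toLp 2 p‖ ^ 2 = p ⬝ᵥ p := by
    rw [← real_inner_self_eq_norm_sq, EuclideanSpace.inner_toLp_toLp, star_trivial]
  have hquad : (α + ε * lam2) * ‖toLp 2 p‖ ^ 2 ≤ α * (‖toLp 2 p‖ * ‖toLp 2 w‖) :=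
    calc (α + ε * lam2) * ‖toLp 2 p‖ ^ 2 = α * (p ⬝ᵥ p) + ε * (lam2 * (p ⬝ᵥ p)) := by
          rw [hnorm_sq]; ring
      _ ≤ α * (p ⬝ᵥ p) + ε * (p ⬝ᵥ G.lapMatrix ℝ *ᵥ p) := by gcongr; exact hconn p hp_sum
      _ = p ⬝ᵥ (α • (1 : Matrix V V ℝ) + ε • G.lapMatrix ℝ) *ᵥ p := by
          simp only [add_mulVec, smul_mulVec, one_mulVec, dotProduct_add, dotProduct_smul,
            smul_eq_mul]
      _ = α * ⟪toLp 2 p, toLp 2 w⟫_ℝ := by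
          rw [hp, dotProduct_smul, smul_eq_mul, EuclideanSpace.inner_toLp_toLp, star_trivial,
            dotProduct_comm]
      _ ≤ α * (‖toLp 2 p‖ * ‖toLp 2 w‖) := by gcongr; exact real_inner_le_norm _ _
  have hden : 0 < α + ε * lam2 := by positivity
  rcases (norm_nonneg (toLp 2 p)).eq_or_lt with hzero | hpos
  · rw [← hzero]; positivity
  · rw [div_mul_eq_mul_div, le_div_iff₀ hden]
    nlinarith

end SimpleGraph

/-- Bounded join process of Open Proportional Dynamic Consensus: arriving agents
join with state equal to their input, so for any set `A` of arriving agents,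
`sqrt(Σ_{v∈A} (u_v - xᵉ_v)²) ≤ √n (1 + 1/(1 + (ε/α)λ₂)) Π`. -/
theorem open_proportional_dynamic_consensus_bounded_join {V : Type*} [Fintype V]
    [DecidableEq V] [Nonempty V] (G : SimpleGraph V) [DecidableRel G.Adj]
    (α ε lam2 Pi' : ℝ) (hα : 0 < α) (hε : 0 < ε) (hlam2 : 0 ≤ lam2)
    (hconn : ∀ w : V → ℝ, (∑ v, w v) = 0 →
      w ⬝ᵥ (G.lapMatrix ℝ) *ᵥ w ≥ lam2 * (w ⬝ᵥ w))
    (u ubar xe : V → ℝ)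
    (hubar : ubar = fun _ => (∑ v, u v) / (Fintype.card V : ℝ))
    (hPi : ∀ v, |u v - ubar v| ≤ Pi')
    (hxe : xe = (α • (1 : Matrix V V ℝ) + ε • G.lapMatrix ℝ)⁻¹ *ᵥ (α • u)) :
    ∀ A : Finset V,
      Real.sqrt (∑ v ∈ A, (u v - xe v) ^ 2) ≤
        Real.sqrt (Fintype.card V : ℝ) * (1 + 1 / (1 + (ε / α) * lam2)) * Pi' := by
  intro A
  set M := α • (1 : Matrix V V ℝ) + ε • G.lapMatrix ℝ
  have hM_det : IsUnit M.det := (G.posDef_smul_one_add_smul_lapMatrix hα hε.le).det_pos.ne'.isUnit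
  have hw : ∑ v, (u - ubar) v = 0 := by subst hubar; exact sum_sub_average_eq_zero u
  have hp : M *ᵥ (xe - ubar) = α • (u - ubar) := by
    rw [mulVec_sub, hxe, mulVec_mulVec, mul_nonsing_inv _ hM_det, one_mulVec, hubar,
      G.smul_one_add_smul_lapMatrix_mulVec_const, smul_sub]
  have hPi_nonneg : 0 ≤ Pi' := (abs_nonneg _).trans (hPi (Classical.arbitrary V))
  have hw_norm : ‖toLp 2 (u - ubar)‖ ≤ √(Fintype.card V) * Pi' :=
    EuclideanSpace.norm_toLp_le_sqrt_card_mul hPi_nonneg hPi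
  have hp_norm := G.norm_toLp_le_of_smul_one_add_smul_lapMatrix_mulVec hα hε.le hlam2 hconn hw hp
  have hratio : α / (α + ε * lam2) = 1 / (1 + (ε / α) * lam2) := by field_simp
  calc √(∑ v ∈ A, (u v - xe v) ^ 2) ≤ ‖toLp 2 ((u - ubar) - (xe - ubar))‖ := by
        rw [sub_sub_sub_cancel_right]; exact EuclideanSpace.sqrt_sum_sq_le_norm_toLp A _
    _ ≤ ‖toLp 2 (u - ubar)‖ + ‖toLp 2 (xe - ubar)‖ := by rw [toLp_sub]; exact norm_sub_le _ _
    _ ≤ (1 + 1 / (1 + (ε / α) * lam2)) * ‖toLp 2 (u - ubar)‖ := by rw [← hratio]; linarith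
    _ ≤ √(Fintype.card V) * (1 + 1 / (1 + (ε / α) * lam2)) * Pi' := by
        rw [mul_assoc, mul_left_comm]; gcongr
end
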